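/- There exist 2×2 self-adjoint complex matrices A, B with A+B ≥ 0 and A−B ≥ 0 for which ‖A+B‖_p^p + ‖A−B‖_p^p < ‖σ(A)+σ(B)‖_p^p + ‖σ(A)−σ(B)‖_p^p for some p with 1 < p < 2. Concretely, A = diag(6, 5) and B = [[0,1],[1,0]] give such a counterexample (e.g., at p = 3/2). -/

import Mathlib

open Matrix Finset
open scoped ComplexOrder

/-- The singular values of a complex square matrix (in unspecified order). -/
noncomputable def sv {n : ℕ} (X : Matrix (Fin n) (Fin n) ℂ) : Fin n → ℝ :=
  fun i => Real.sqrt ((Matrix.posSemidef_conjTranspose_mul_self X).isHermitian.eigenvalues i)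

/-- Singular values arranged in increasing order. -/
noncomputable def svAsc {n : ℕ} (X : Matrix (Fin n) (Fin n) ℂ) : Fin n → ℝ :=
  sv X ∘ Tuple.sort (sv X)

/-- Singular values arranged in decreasing order. -/
noncomputable def svDesc {n : ℕ} (X : Matrix (Fin n) (Fin n) ℂ) : Fin n → ℝ :=
  fun i => svAsc X i.rev

/-- The p-th power of the p-Schatten norm: ‖X‖_p^p = ∑ σ_i(X)^p = Tr[(X*X)^{p/2}]. -/
noncomputable def schattenPow {n : ℕ} (p : ℝ) (X : Matrix (Fin n) (Fin n) ℂ) : ℝ :=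
  ∑ i, sv X i ^ p

/-!
For a 2 × 2 matrix the singular values `s₀, s₁` are pinned down by `s₀² + s₁² = Tr (XᴴX)` and
`s₀ s₁ = |det X|`. Thus `σ(A) = (6, 5)` and `σ(B) = (1, 1)`, while `A ± B = [[6, ±1], [±1, 5]]`
both have `s₀ + s₁ = 11` and `s₀ s₁ = 29`. For `p = 3/2` the identity
`(s^{3/2} + t^{3/2})² = (s + t)³ - 3st(s + t) + 2(st)^{3/2}` gives
`‖A ± B‖_{3/2}^{3/2} = √(374 + 58√29) ≈ 26.19808`, and twice this is just below
`7^{3/2} + 6^{3/2} + 5^{3/2} + 4^{3/2} ≈ 52.39754`.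
-/

lemma sv_nonneg {n : ℕ} (X : Matrix (Fin n) (Fin n) ℂ) (i : Fin n) : 0 ≤ sv X i :=
  Real.sqrt_nonneg _

lemma sv_sq {n : ℕ} (X : Matrix (Fin n) (Fin n) ℂ) (i : Fin n) :
    sv X i ^ 2 = (posSemidef_conjTranspose_mul_self X).isHermitian.eigenvalues i :=
  Real.sq_sqrt ((posSemidef_conjTranspose_mul_self X).eigenvalues_nonneg i)

lemma sum_sv_sq {n : ℕ} (X : Matrix (Fin n) (Fin n) ℂ) :
    ∑ i, sv X i ^ 2 = (Xᴴ * X).trace.re := by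
  simp [(posSemidef_conjTranspose_mul_self X).isHermitian.trace_eq_sum_eigenvalues, sv_sq]

lemma prod_sv {n : ℕ} (X : Matrix (Fin n) (Fin n) ℂ) : ∏ i, sv X i = ‖X.det‖ := by
  have h : (∏ i, sv X i) ^ 2 = ‖X.det‖ ^ 2 := by
    apply RCLike.ofReal_injective (K := ℂ)
    rw [← prod_pow]
    simp only [sv_sq]
    rw [RCLike.ofReal_prod,
      ← (posSemidef_conjTranspose_mul_self X).isHermitian.det_eq_prod_eigenvalues, det_mul,
      det_conjTranspose, RCLike.star_def, RCLike.conj_mul, RCLike.ofReal_pow]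
  exact (pow_left_inj₀ (prod_nonneg fun i _ => sv_nonneg X i) (norm_nonneg _) two_ne_zero).1 h

lemma sum_svDesc_comp {n : ℕ} (X : Matrix (Fin n) (Fin n) ℂ) (g : ℝ → ℝ) :
    ∑ i, g (svDesc X i) = ∑ i, g (sv X i) :=
  Equiv.sum_comp (Fin.revPerm.trans (Tuple.sort (sv X))) (g ∘ sv X)

lemma eq_and_eq_or_eq_and_eq_of_add_eq_of_mul_eq {x y a b : ℝ} (hs : x + y = a + b)
    (hp : x * y = a * b) : (x = a ∧ y = b) ∨ (x = b ∧ y = a) := by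
  have h : (x - a) * (x - b) = 0 := by linear_combination x * hs - hp
  rcases mul_eq_zero.1 h with h | h
  · exact .inl ⟨by linarith, by linarith⟩
  · exact .inr ⟨by linarith, by linarith⟩

lemma rpow_three_halves {x : ℝ} (hx : 0 ≤ x) : x ^ (3 / 2 : ℝ) = x * √x := by
  rw [show (3 / 2 : ℝ) = 1 + 1 / 2 by norm_num, Real.rpow_add' hx (by norm_num),
    Real.rpow_one, ← Real.sqrt_eq_rpow]

lemma lt_rpow_three_halves {x c : ℝ} (hx : 0 ≤ x) (h : c ^ 2 < x ^ 3) : c < x ^ (3 / 2 : ℝ) := by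
  refine lt_of_pow_lt_pow_left₀ 2 (Real.rpow_nonneg hx _) ?_
  rwa [rpow_three_halves hx, mul_pow, Real.sq_sqrt hx, ← pow_succ]

lemma rpow_three_halves_add_sq {s t : ℝ} (hs : 0 ≤ s) (ht : 0 ≤ t) :
    (s ^ (3 / 2 : ℝ) + t ^ (3 / 2 : ℝ)) ^ 2
      = (s + t) ^ 3 - 3 * (s * t) * (s + t) + 2 * (s * t) * √(s * t) := by
  obtain ⟨a, ha, rfl⟩ : ∃ a, 0 ≤ a ∧ s = a ^ 2 := ⟨√s, Real.sqrt_nonneg s, (Real.sq_sqrt hs).symm⟩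
  obtain ⟨b, hb, rfl⟩ : ∃ b, 0 ≤ b ∧ t = b ^ 2 := ⟨√t, Real.sqrt_nonneg t, (Real.sq_sqrt ht).symm⟩
  rw [rpow_three_halves hs, rpow_three_halves ht, ← mul_pow, Real.sqrt_sq ha, Real.sqrt_sq hb,
    Real.sqrt_sq (mul_nonneg ha hb)]
  ring

section FinTwo

variable (X : Matrix (Fin 2) (Fin 2) ℂ)

lemma sv_zero_mul_sv_one : sv X 0 * sv X 1 = ‖X.det‖ := by
  rw [← prod_sv, Fin.prod_univ_two]

lemma sv_zero_add_sv_one_sq : (sv X 0 + sv X 1) ^ 2 = (Xᴴ * X).trace.re + 2 * ‖X.det‖ := by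
  rw [← sum_sv_sq, ← sv_zero_mul_sv_one, Fin.sum_univ_two]
  ring

lemma sv_fin_two_eq_or_swap {a b : ℝ} (ha : 0 ≤ a) (hb : 0 ≤ b)
    (htr : (Xᴴ * X).trace.re = a ^ 2 + b ^ 2) (hdet : ‖X.det‖ = a * b) :
    (sv X 0 = a ∧ sv X 1 = b) ∨ (sv X 0 = b ∧ sv X 1 = a) := by
  have hsum : sv X 0 + sv X 1 = a + b := by
    refine (pow_left_inj₀ (add_nonneg (sv_nonneg X 0) (sv_nonneg X 1)) (add_nonneg ha hb)
      two_ne_zero).1 ?_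
    rw [sv_zero_add_sv_one_sq, htr, hdet]
    ring
  exact eq_and_eq_or_eq_and_eq_of_add_eq_of_mul_eq hsum ((sv_zero_mul_sv_one X).trans hdet)

lemma schattenPow_three_halves_sq : schattenPow (3 / 2) X ^ 2
    = (sv X 0 + sv X 1) ^ 3 - 3 * ‖X.det‖ * (sv X 0 + sv X 1) + 2 * ‖X.det‖ * √‖X.det‖ := by
  rw [schattenPow, Fin.sum_univ_two, rpow_three_halves_add_sq (sv_nonneg X 0) (sv_nonneg X 1),
    sv_zero_mul_sv_one]

end FinTwo

lemma Matrix.IsHermitian.posSemidef_of_fin_two {𝕜 : Type*} [RCLike 𝕜]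
    {M : Matrix (Fin 2) (Fin 2) 𝕜} (hM : M.IsHermitian) (htr : 0 ≤ RCLike.re M.trace) (hdet : 0 ≤ RCLike.re M.det) :
    M.PosSemidef := by
  rw [hM.trace_eq_sum_eigenvalues, Fin.sum_univ_two] at htr
  rw [hM.det_eq_prod_eigenvalues, Fin.prod_univ_two] at hdet
  simp only [map_add, RCLike.ofReal_re, ← RCLike.ofReal_mul] at htr hdet
  have h₀ : 0 ≤ hM.eigenvalues 0 := by nlinarith
  have h₁ : 0 ≤ hM.eigenvalues 1 := by nlinarith
  rw [hM.posSemidef_iff_eigenvalues_nonneg]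
  intro i
  fin_cases i
  exacts [h₀, h₁]

def realSymm (a b c : ℝ) : Matrix (Fin 2) (Fin 2) ℂ := !![(a : ℂ), c; c, b]

section RealSymm

variable (a b c : ℝ)

lemma realSymm_isHermitian : (realSymm a b c).IsHermitian := by
  ext i j
  fin_cases i <;> fin_cases j <;> simp [realSymm]

lemma realSymm_add (a' b' c' : ℝ) :
    realSymm a b c + realSymm a' b' c' = realSymm (a + a') (b + b') (c + c') := by
  ext i j
  fin_cases i <;> fin_cases j <;> simp [realSymm]

lemma realSymm_sub (a' b' c' : ℝ) :
    realSymm a b c - realSymm a' b' c' = realSymm (a - a') (b - b') (c - c') := by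
  ext i j
  fin_cases i <;> fin_cases j <;> simp [realSymm]

lemma trace_realSymm : (realSymm a b c).trace = ((a + b : ℝ) : ℂ) := by
  simp [realSymm, trace_fin_two]

lemma det_realSymm : (realSymm a b c).det = ((a * b - c ^ 2 : ℝ) : ℂ) := by
  simp [realSymm, det_fin_two, sq]

lemma realSymm_mul_self :
    realSymm a b c * realSymm a b c = realSymm (a ^ 2 + c ^ 2) (b ^ 2 + c ^ 2) ((a + b) * c) := by
  simp only [realSymm, mul_fin_two]
  push_cast
  ring_nf

lemma re_trace_conjTranspose_mul_self_realSymm :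
    ((realSymm a b c)ᴴ * realSymm a b c).trace.re = a ^ 2 + b ^ 2 + 2 * c ^ 2 := by
  rw [(realSymm_isHermitian a b c).eq, realSymm_mul_self, trace_realSymm, Complex.ofReal_re]
  ring

lemma realSymm_posSemidef (hab : 0 ≤ a + b) (hc : c ^ 2 ≤ a * b) :
    (realSymm a b c).PosSemidef :=
  (realSymm_isHermitian a b c).posSemidef_of_fin_two
    (by rw [trace_realSymm, RCLike.re_to_complex, Complex.ofReal_re]; exact hab)
    (by rw [det_realSymm, RCLike.re_to_complex, Complex.ofReal_re]; linarith)

end RealSymm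

lemma sv_realSymm_six_five_zero :
    (sv (realSymm 6 5 0) 0 = 6 ∧ sv (realSymm 6 5 0) 1 = 5) ∨
      (sv (realSymm 6 5 0) 0 = 5 ∧ sv (realSymm 6 5 0) 1 = 6) :=
  sv_fin_two_eq_or_swap _ (by norm_num) (by norm_num)
    (by rw [re_trace_conjTranspose_mul_self_realSymm]; norm_num)
    (by rw [det_realSymm]; norm_num)

lemma sv_realSymm_zero_zero_one (i : Fin 2) : sv (realSymm 0 0 1) i = 1 := by
  have h := sv_fin_two_eq_or_swap (realSymm 0 0 1) zero_le_one zero_le_one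
    (by rw [re_trace_conjTranspose_mul_self_realSymm]; norm_num)
    (by rw [det_realSymm]; norm_num)
  rcases h with ⟨h0, h1⟩ | ⟨h0, h1⟩ <;> fin_cases i <;> assumption

lemma sum_abs_svDesc_add_sub_rpow (p : ℝ) :
    (∑ i, |svDesc (realSymm 6 5 0) i + svDesc (realSymm 0 0 1) i| ^ p) +
      (∑ i, |svDesc (realSymm 6 5 0) i - svDesc (realSymm 0 0 1) i| ^ p)
      = 7 ^ p + 6 ^ p + (5 ^ p + 4 ^ p) := by
  have hB (i : Fin 2) : svDesc (realSymm 0 0 1) i = 1 := sv_realSymm_zero_zero_one _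
  simp only [hB, sum_svDesc_comp (realSymm 6 5 0) fun x => |x + 1| ^ p,
    sum_svDesc_comp (realSymm 6 5 0) fun x => |x - 1| ^ p, Fin.sum_univ_two]
  rcases sv_realSymm_six_five_zero with ⟨h0, h1⟩ | ⟨h0, h1⟩
  · rw [h0, h1]
    norm_num
  · rw [h0, h1]
    norm_num
    ring

lemma schattenPow_three_halves_realSymm_lt {c : ℝ} (hc : c ^ 2 = 1) :
    schattenPow (3 / 2) (realSymm 6 5 c) < 26.1981 := by
  set X := realSymm 6 5 c
  have hP : ‖X.det‖ = 29 := by rw [det_realSymm, hc]; norm_num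
  have hS : sv X 0 + sv X 1 = 11 := by
    refine (pow_left_inj₀ (add_nonneg (sv_nonneg X 0) (sv_nonneg X 1)) (by norm_num)
      two_ne_zero).1 ?_
    rw [sv_zero_add_sv_one_sq, re_trace_conjTranspose_mul_self_realSymm, hc, hP]
    norm_num
  have h29 : √29 < 5.385165 := by rw [Real.sqrt_lt' (by norm_num)]; norm_num
  refine lt_of_pow_lt_pow_left₀ 2 (by norm_num) ?_
  rw [schattenPow_three_halves_sq, hS, hP]
  linarith

theorem counterexample_to_aligned_rearrangement :
    ∃ A B : Matrix (Fin 2) (Fin 2) ℂ,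
      A.IsHermitian ∧ B.IsHermitian ∧ (A + B).PosSemidef ∧ (A - B).PosSemidef ∧
      ∃ p : ℝ, 1 < p ∧ p < 2 ∧
        schattenPow p (A + B) + schattenPow p (A - B) <
          (∑ i, |svDesc A i + svDesc B i| ^ p) + (∑ i, |svDesc A i - svDesc B i| ^ p) := by
  refine ⟨realSymm 6 5 0, realSymm 0 0 1, realSymm_isHermitian _ _ _, realSymm_isHermitian _ _ _,
    ?_, ?_, 3 / 2, by norm_num, by norm_num, ?_⟩
  · rw [realSymm_add]
    exact realSymm_posSemidef _ _ _ (by norm_num) (by norm_num)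
  · rw [realSymm_sub]
    exact realSymm_posSemidef _ _ _ (by norm_num) (by norm_num)
  simp only [sum_abs_svDesc_add_sub_rpow, realSymm_add, realSymm_sub, add_zero, sub_zero, zero_add,
    zero_sub]
  have h7 : (18.52025 : ℝ) < 7 ^ (3 / 2 : ℝ) := lt_rpow_three_halves (by norm_num) (by norm_num)
  have h6 : (14.69693 : ℝ) < 6 ^ (3 / 2 : ℝ) := lt_rpow_three_halves (by norm_num) (by norm_num)
  have h5 : (11.18033 : ℝ) < 5 ^ (3 / 2 : ℝ) := lt_rpow_three_halves (by norm_num) (by norm_num)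
  have h4 : (7.9999 : ℝ) < 4 ^ (3 / 2 : ℝ) := lt_rpow_three_halves (by norm_num) (by norm_num)
  linarith [schattenPow_three_halves_realSymm_lt (c := 1) (by norm_num),
    schattenPow_three_halves_realSymm_lt (c := -1) (by norm_num)]
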